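/- arXiv:2310.08019 — 5 statements merged into one kernel-verified Lean document; each statement's English description precedes it below -/
import Mathlib

section
/- Let A ∈ ℝ^{m×n}, x ∈ Σ_k^n, y ∈ {−1,1}^m, and let (x̂⁽ᵗ⁾)_{t≥0} be the BIHT iterates with inputs y and A started from any x̂⁽⁰⁾ ∈ Σ_k^n. Fix t ≥ 1 and suppose the intermediate vector x̃⁽ᵗ⁾ = x̂⁽ᵗ⁻¹⁾ + (√(2π)/m)·Aᵀ·(1/2)(y − sign(A x̂⁽ᵗ⁻¹⁾)) has at least k nonzero entries. Then d_S(x, x̂⁽ᵗ⁾) ≤ 4·‖ (x − x̂⁽ᵗ⁻¹⁾) − T'_{supp(x) ∪ supp(x̂⁽ᵗ⁻¹⁾) ∪ supp(x̂⁽ᵗ⁾)}( (√(2π)/m)·Aᵀ·(1/2)(y − sign(A x̂⁽ᵗ⁻¹⁾)) ) ‖₂. -/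
open MeasureTheory ProbabilityTheory Filter
open scoped Classical Real ENNReal RealInnerProductSpace

noncomputable section

/-- The sign function: `-1` for negatives, `+1` otherwise. -/
def sgn (a : ℝ) : ℝ := if a < 0 then -1 else 1

/-- Support of a vector. -/
def spt {n : ℕ} (u : EuclideanSpace ℝ (Fin n)) : Set (Fin n) := {j | u j ≠ 0}

/-- `J`-subset hard thresholding: keep entries indexed by `J`, zero out the rest. -/
def thresh {n : ℕ} (J : Set (Fin n)) (u : EuclideanSpace ℝ (Fin n)) :
    EuclideanSpace ℝ (Fin n) := WithLp.toLp 2 (fun j => if j ∈ J then u j else 0)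

/-- The set `Σ_k^n` of `k`-sparse unit vectors in `ℝⁿ`. -/
def SparseUnit (k n : ℕ) : Set (EuclideanSpace ℝ (Fin n)) :=
  {x | ‖x‖ = 1 ∧ (spt x).ncard ≤ k}

/-- The distance between projections onto the unit sphere. -/
def distS {n : ℕ} (u v : EuclideanSpace ℝ (Fin n)) : ℝ :=
  if u = 0 ∧ v = 0 then 0
  else if u = 0 ∨ v = 0 then 1
  else ‖(‖u‖⁻¹ • u) - (‖v‖⁻¹ • v)‖

/-- View a plain function as a vector of Euclidean space. -/
def toE {n : ℕ} (v : Fin n → ℝ) : EuclideanSpace ℝ (Fin n) := WithLp.toLp 2 v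

/-- `sign (A v)`, the coordinatewise signs of the matrix-vector product. -/
def signAv {m n : ℕ} (A : Fin m → Fin n → ℝ) (v : EuclideanSpace ℝ (Fin n)) : Fin m → ℝ :=
  fun i => sgn (∑ j, A i j * v j)

/-- `h_A(u,v) = (√(2π)/m)·Aᵀ·(1/2)(sign(Au) − sign(Av))`. -/
def hA {m n : ℕ} (A : Fin m → Fin n → ℝ) (u v : EuclideanSpace ℝ (Fin n)) :
    EuclideanSpace ℝ (Fin n) :=
  WithLp.toLp 2 (fun j => (Real.sqrt (2 * Real.pi) / m) * ∑ i, A i j * ((1 / 2) * (signAv A u i - signAv A v i)))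

/-- `h_{f,A}(u,v) = (√(2π)/m)·Aᵀ·(1/2)(f(u) − sign(Av))`. -/
def hfA {m n : ℕ} (A : Fin m → Fin n → ℝ)
    (f : EuclideanSpace ℝ (Fin n) → Fin m → ℝ) (u v : EuclideanSpace ℝ (Fin n)) :
    EuclideanSpace ℝ (Fin n) :=
  WithLp.toLp 2 (fun j => (Real.sqrt (2 * Real.pi) / m) * ∑ i, A i j * ((1 / 2) * (f u i - signAv A v i)))

/-- `h_{A,J}(u,v) = T'_{supp u ∪ supp v ∪ J}(h_A(u,v))`. -/
def hAJ {m n : ℕ} (A : Fin m → Fin n → ℝ) (J : Set (Fin n))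
    (u v : EuclideanSpace ℝ (Fin n)) : EuclideanSpace ℝ (Fin n) :=
  thresh (spt u ∪ spt v ∪ J) (hA A u v)

/-- `h_{f,A,J}(u,v) = T'_{supp u ∪ supp v ∪ J}(h_{f,A}(u,v))`. -/
def hfAJ {m n : ℕ} (A : Fin m → Fin n → ℝ)
    (f : EuclideanSpace ℝ (Fin n) → Fin m → ℝ) (J : Set (Fin n))
    (u v : EuclideanSpace ℝ (Fin n)) : EuclideanSpace ℝ (Fin n) :=
  thresh (spt u ∪ spt v ∪ J) (hfA A f u v)

/-- Hamming distance between two vectors in `ℝ^m`. -/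
def hamm {m : ℕ} (y z : Fin m → ℝ) : ℕ := (Finset.univ.filter fun i => y i ≠ z i).card

/-- Law of an `m × n` matrix with i.i.d. standard Gaussian entries
(rows i.i.d. `N(0, I_n)`). -/
def gaussMat (m n : ℕ) : Measure (Fin m → Fin n → ℝ) :=
  Measure.pi fun _ : Fin m => Measure.pi fun _ : Fin n => gaussianReal 0 1

/-- `v` is a top-`k` hard thresholding of `u` (ties broken arbitrarily). -/
def IsTopK {n : ℕ} (k : ℕ) (u v : EuclideanSpace ℝ (Fin n)) : Prop :=
  ∃ S : Finset (Fin n), S.card = k ∧ (∀ j, v j = if j ∈ S then u j else 0) ∧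
    ∀ i ∈ S, ∀ j ∉ S, |u j| ≤ |u i|

/-- The gradient-type term `(√(2π)/m)·Aᵀ·(1/2)(y − sign(Av))` used by BIHT. -/
def grad {m n : ℕ} (A : Fin m → Fin n → ℝ) (y : Fin m → ℝ)
    (v : EuclideanSpace ℝ (Fin n)) : EuclideanSpace ℝ (Fin n) :=
  WithLp.toLp 2 (fun j => (Real.sqrt (2 * Real.pi) / m) * ∑ i, A i j * ((1 / 2) * (y i - signAv A v i)))

/-- The BIHT intermediate iterate `x̃ = v + (√(2π)/m)·Aᵀ·(1/2)(y − sign(Av))`. -/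
def bihtTilde {m n : ℕ} (A : Fin m → Fin n → ℝ) (y : Fin m → ℝ)
    (v : EuclideanSpace ℝ (Fin n)) : EuclideanSpace ℝ (Fin n) :=
  v + grad A y v


/-- Compare Euclidean norms via sums of squares. -/
lemma norm_le_norm_of_sq_sum_le {n : ℕ} (u v : EuclideanSpace ℝ (Fin n))
    (h : ∑ j, u j ^ 2 ≤ ∑ j, v j ^ 2) : ‖u‖ ≤ ‖v‖ := by
  rw [EuclideanSpace.norm_eq, EuclideanSpace.norm_eq]
  apply Real.sqrt_le_sqrt
  simpa [Real.norm_eq_abs, sq_abs] using h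

/-- deterministic bound on the error of the `(t+1)`-st BIHT iterate
(the paper's step `t ≥ 1`, with `x̂⁽ᵗ⁻¹⁾ = xh t` and `x̂⁽ᵗ⁾ = xh (t+1)`). -/
theorem stmt_2 {m n k : ℕ} (A : Fin m → Fin n → ℝ)
    (x : EuclideanSpace ℝ (Fin n)) (hx : x ∈ SparseUnit k n)
    (y : Fin m → ℝ) (hy : ∀ i, y i = 1 ∨ y i = -1)
    (xh : ℕ → EuclideanSpace ℝ (Fin n)) (h0 : xh 0 ∈ SparseUnit k n)
    (hrec : ∀ s : ℕ, ∃ w : EuclideanSpace ℝ (Fin n),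
      IsTopK k (bihtTilde A y (xh s)) w ∧ xh (s + 1) = ‖w‖⁻¹ • w)
    (t : ℕ) (hsp : k ≤ (spt (bihtTilde A y (xh t))).ncard) :
    distS x (xh (t + 1)) ≤
      4 * ‖(x - xh t) -
            thresh (spt x ∪ spt (xh t) ∪ spt (xh (t + 1))) (grad A y (xh t))‖ := by
  classical
  obtain ⟨hxnorm, hxcard⟩ := hx
  obtain ⟨w, ⟨S, hScard, hwdef, htop⟩, hx'⟩ := hrec t
  set v : EuclideanSpace ℝ (Fin n) := xh t with hv
  set g : EuclideanSpace ℝ (Fin n) := grad A y (xh t) with hg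
  set xt : EuclideanSpace ℝ (Fin n) := bihtTilde A y (xh t) with hxtdef
  have hxtj : ∀ j, xt j = v j + g j := fun j => rfl
  set J : Set (Fin n) := spt x ∪ spt (xh t) ∪ spt (xh (t + 1)) with hJ
  have hxne : x ≠ 0 := by
    intro h; rw [h, norm_zero] at hxnorm; norm_num at hxnorm
  -- k ≥ 1
  have hsptx : (spt x).Nonempty := by
    have hxne' : x.ofLp ≠ 0 := by intro h; apply hxne; ext j; simp [h]
    rcases Function.ne_iff.mp hxne' with ⟨j, hj⟩
    exact ⟨j, hj⟩
  have hk1 : 1 ≤ k := le_trans ((Set.ncard_pos (Set.toFinite _)).mpr hsptx) hxcard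
  -- w ≠ 0
  have hwne : w ≠ 0 := by
    intro h0
    have hw0 : ∀ j, w j = 0 := fun j => by rw [h0]; rfl
    have hSzero : ∀ j ∈ S, xt j = 0 := by
      intro j hj
      have := hwdef j
      rw [hw0 j, if_pos hj] at this
      exact this.symm
    have hne : (spt xt).Nonempty := by
      have := Set.ncard_pos (Set.toFinite (spt xt))
      rw [← this]
      omega
    obtain ⟨j0, hj0⟩ := hne
    have hj0S : j0 ∉ S := fun h => hj0 (hSzero j0 h)
    obtain ⟨i, hi⟩ := Finset.card_pos.mp (by omega : 0 < S.card)
    have := htop i hi j0 hj0S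
    rw [hSzero i hi] at this
    simp only [abs_zero] at this
    exact hj0 (abs_nonpos_iff.mp this)
  have hx'ne : xh (t + 1) ≠ 0 := by
    rw [hx']
    exact smul_ne_zero (inv_ne_zero (norm_ne_zero_iff.mpr hwne)) hwne
  have hx'norm : ‖xh (t + 1)‖ = 1 := by rw [hx']; exact norm_smul_inv_norm hwne
  -- support facts
  have hsptw : ∀ j, w j ≠ 0 → j ∈ J := by
    intro j hj
    have : xh (t + 1) j ≠ 0 := by
      rw [hx']
      exact mul_ne_zero (inv_ne_zero (norm_ne_zero_iff.mpr hwne)) hj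
    exact Or.inr this
  have hSJ : ∀ j ∈ S, xt j ≠ 0 → j ∈ J := by
    intro j hj hxtj0
    apply hsptw
    rw [hwdef j, if_pos hj]
    exact hxtj0
  have hxJ : ∀ j, x j ≠ 0 → j ∈ J := fun j hj => Or.inl (Or.inl hj)
  have hvJ : ∀ j, j ∉ J → v j = 0 := by
    intro j hj
    by_contra h
    exact hj (Or.inl (Or.inr h))
  -- Claim A : the error vector equals x - thresh J xt
  have claimA : x - v - thresh J g = x - thresh J xt := by
    ext j
    show x j - v j - thresh J g j = x j - thresh J xt j
    by_cases hjJ : j ∈ J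
    · simp only [thresh, WithLp.ofLp_toLp, if_pos hjJ, hxtj j]; ring
    · simp only [thresh, WithLp.ofLp_toLp, if_neg hjJ, hvJ j hjJ]; ring
  set e : EuclideanSpace ℝ (Fin n) := x - v - thresh J g with he
  -- Finsets
  set T : Finset (Fin n) := (spt x).toFinset with hT
  have hTmem : ∀ j, j ∈ T ↔ x j ≠ 0 := by
    intro j; rw [hT, Set.mem_toFinset]; rfl
  have hTcard : T.card ≤ k := by
    rw [hT, ← Set.ncard_eq_toFinset_card']
    exact hxcard
  set JF : Finset (Fin n) := Finset.univ.filter (· ∈ J) with hJF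
  have hJFmem : ∀ j, j ∈ JF ↔ j ∈ J := by
    intro j; simp [hJF]
  -- core: sum over T \ S ≤ sum over S \ T
  have hcardST : (T \ S).card ≤ (S \ T).card := by
    have h1 := Finset.card_sdiff_add_card_inter T S
    have h2 := Finset.card_sdiff_add_card_inter S T
    have h3 : (T ∩ S).card = (S ∩ T).card := by rw [Finset.inter_comm]
    omega
  have hcore : ∑ j ∈ T \ S, xt j ^ 2 ≤ ∑ j ∈ S \ T, xt j ^ 2 := by
    rcases Finset.eq_empty_or_nonempty (T \ S) with hTS | hTS
    · rw [hTS, Finset.sum_empty]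
      exact Finset.sum_nonneg fun j _ => sq_nonneg _
    · have hSTne : (S \ T).Nonempty := by
        apply Finset.card_pos.mp
        have := Finset.card_pos.mpr hTS
        omega
      obtain ⟨i0, hi0, hi0min⟩ := Finset.exists_min_image (S \ T) (fun j => xt j ^ 2) hSTne
      have hi0S : i0 ∈ S := (Finset.mem_sdiff.mp hi0).1
      calc ∑ j ∈ T \ S, xt j ^ 2 ≤ ∑ _j ∈ T \ S, xt i0 ^ 2 := by
              apply Finset.sum_le_sum
              intro j hj
              have hjS : j ∉ S := (Finset.mem_sdiff.mp hj).2
              have := htop i0 hi0S j hjS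
              calc xt j ^ 2 = |xt j| ^ 2 := (sq_abs _).symm
                _ ≤ |xt i0| ^ 2 := pow_le_pow_left₀ (abs_nonneg _) this 2
                _ = xt i0 ^ 2 := sq_abs _
        _ = (T \ S).card * xt i0 ^ 2 := by rw [Finset.sum_const, nsmul_eq_mul]
        _ ≤ (S \ T).card * xt i0 ^ 2 := by
              apply mul_le_mul_of_nonneg_right _ (sq_nonneg _)
              exact Nat.cast_le.mpr hcardST
        _ = ∑ _j ∈ S \ T, xt i0 ^ 2 := by rw [Finset.sum_const, nsmul_eq_mul]
        _ ≤ ∑ j ∈ S \ T, xt j ^ 2 := Finset.sum_le_sum hi0min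
  -- Claim B : ‖thresh J xt - w‖ ≤ ‖e‖
  have claimB : ‖thresh J xt - w‖ ≤ ‖e‖ := by
    apply norm_le_norm_of_sq_sum_le
    have hP : ∀ j, (thresh J xt - w) j ^ 2 = if j ∈ JF \ S then xt j ^ 2 else 0 := by
      intro j
      have : (thresh J xt - w) j = thresh J xt j - w j := rfl
      rw [this, hwdef j]
      by_cases hjS : j ∈ S
      · by_cases hjJ : j ∈ J
        · simp [thresh, hjS, hjJ, Finset.mem_sdiff, hJFmem]
        · have hxt0 : xt j = 0 := by
            by_contra h
            exact hjJ (hSJ j hjS h)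
          simp [thresh, hjS, hjJ, hxt0, Finset.mem_sdiff, hJFmem]
      · by_cases hjJ : j ∈ J
        · simp [thresh, hjS, hjJ, Finset.mem_sdiff, hJFmem, hJFmem j]
        · simp [thresh, hjS, hjJ, Finset.mem_sdiff, hJFmem]
    have hQ : ∀ j, (if j ∈ JF \ T then xt j ^ 2 else 0) ≤ e j ^ 2 := by
      intro j
      have heA : e j = x j - thresh J xt j := congrArg (fun z => z.ofLp j) claimA
      by_cases hj : j ∈ JF \ T
      · obtain ⟨hjJ, hjT⟩ := Finset.mem_sdiff.mp hj
        have hx0 : x j = 0 := by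
          by_contra h
          exact hjT ((hTmem j).mpr h)
        rw [if_pos hj, heA]
        have : thresh J xt j = xt j := by simp [thresh, (hJFmem j).mp hjJ]
        rw [this, hx0, zero_sub, neg_sq]
      · rw [if_neg hj]
        exact sq_nonneg _
    calc ∑ j, (thresh J xt - w) j ^ 2 = ∑ j ∈ JF \ S, xt j ^ 2 := by
            rw [Finset.sum_congr rfl fun j _ => hP j]
            rw [← Finset.sum_filter, Finset.filter_mem_eq_inter, Finset.univ_inter]
      _ ≤ ∑ j ∈ JF \ T, xt j ^ 2 := by
            rw [← Finset.sum_filter_add_sum_filter_not (JF \ S) (· ∈ T),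
                ← Finset.sum_filter_add_sum_filter_not (JF \ T) (· ∈ S)]
            have heqf : (JF \ S).filter (· ∉ T) = (JF \ T).filter (· ∉ S) := by
              ext j
              simp only [Finset.mem_filter, Finset.mem_sdiff]
              tauto
            rw [heqf]
            apply add_le_add_left
            calc ∑ j ∈ (JF \ S).filter (· ∈ T), xt j ^ 2
                ≤ ∑ j ∈ T \ S, xt j ^ 2 := by
                  apply Finset.sum_le_sum_of_subset_of_nonneg
                  · intro j hj
                    simp only [Finset.mem_filter, Finset.mem_sdiff] at hj ⊢
                    tauto
                  · intro j _ _; exact sq_nonneg _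
              _ ≤ ∑ j ∈ S \ T, xt j ^ 2 := hcore
              _ = ∑ j ∈ (JF \ T).filter (· ∈ S), xt j ^ 2 := by
                  apply (Finset.sum_subset _ _).symm
                  · intro j hj
                    simp only [Finset.mem_filter, Finset.mem_sdiff] at hj ⊢
                    tauto
                  · intro j hj hnj
                    have hjS : j ∈ S := (Finset.mem_sdiff.mp hj).1
                    have hjT : j ∉ T := (Finset.mem_sdiff.mp hj).2
                    have hjJ : j ∉ J := by
                      intro hJj
                      apply hnj
                      simp only [Finset.mem_filter, Finset.mem_sdiff, hJFmem]
                      exact ⟨⟨hJj, hjT⟩, hjS⟩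
                    have : xt j = 0 := by
                      by_contra h
                      exact hjJ (hSJ j hjS h)
                    rw [this]; ring
      _ ≤ ∑ j, e j ^ 2 := by
            calc ∑ j ∈ JF \ T, xt j ^ 2
                = ∑ j, (if j ∈ JF \ T then xt j ^ 2 else 0) := by
                  rw [Finset.sum_ite_mem, Finset.univ_inter]
              _ ≤ ∑ j, e j ^ 2 := Finset.sum_le_sum fun j _ => hQ j
    done
  -- ‖x - w‖ ≤ 2 ‖e‖
  have hxw : ‖x - w‖ ≤ 2 * ‖e‖ := by
    have h1 : x - w = (x - thresh J xt) + (thresh J xt - w) := by abel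
    rw [h1]
    calc ‖(x - thresh J xt) + (thresh J xt - w)‖
        ≤ ‖x - thresh J xt‖ + ‖thresh J xt - w‖ := norm_add_le _ _
      _ ≤ ‖e‖ + ‖e‖ := by
          rw [← claimA]
          exact add_le_add le_rfl claimB
      _ = 2 * ‖e‖ := by ring
  -- distS
  have hd : distS x (xh (t + 1)) = ‖x - xh (t + 1)‖ := by
    rw [distS, if_neg (by tauto), if_neg (by tauto)]
    rw [hxnorm, hx'norm, inv_one, one_smul, one_smul]
  have hwx' : ‖w - xh (t + 1)‖ ≤ ‖x - w‖ := by
    have h1 : w - xh (t + 1) = (1 - ‖w‖⁻¹) • w := by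
      rw [hx', sub_smul, one_smul]
    rw [h1, norm_smul, Real.norm_eq_abs]
    have hwn : ‖w‖ ≠ 0 := norm_ne_zero_iff.mpr hwne
    have h2 : |1 - ‖w‖⁻¹| * ‖w‖ = |(1 - ‖w‖⁻¹) * ‖w‖| := by
      rw [abs_mul, abs_of_nonneg (norm_nonneg w)]
    have h3 : (1 - ‖w‖⁻¹) * ‖w‖ = ‖w‖ - 1 := by
      field_simp
    rw [h2, h3]
    calc |‖w‖ - 1| = |‖w‖ - ‖x‖| := by rw [hxnorm]
      _ ≤ ‖w - x‖ := abs_norm_sub_norm_le w x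
      _ = ‖x - w‖ := norm_sub_rev w x
  have hfin : distS x (xh (t + 1)) ≤ 4 * ‖e‖ := by
    rw [hd]
    have h1 : x - xh (t + 1) = (x - w) + (w - xh (t + 1)) := by abel
    calc ‖x - xh (t + 1)‖ = ‖(x - w) + (w - xh (t + 1))‖ := by rw [← h1]
      _ ≤ ‖x - w‖ + ‖w - xh (t + 1)‖ := norm_add_le _ _
      _ ≤ ‖x - w‖ + ‖x - w‖ := add_le_add le_rfl hwx'
      _ = 2 * ‖x - w‖ := by ring
      _ ≤ 2 * (2 * ‖e‖) := by linarith
      _ = 4 * ‖e‖ := by ring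
  exact hfin
end
end

section
/- Let c₁, c₂ > 0, set c = 4(c₁ + √(c₁² + c₂))², and let γ ∈ (0,1]. Define e : ℤ_{≥0} → ℝ by e(0) = 2 and e(t) = 4c₁·√((γ/c)·e(t−1)) + 4c₂γ/c for t ≥ 1. Then e(t) ≤ 2^{2^{−t}}·γ^{1−2^{−t}} for every t ≥ 0, and the limit lim_{t→∞} e(t) exists and satisfies lim_{t→∞} e(t) ≤ γ. -/
open Filter Real

/-- the BIHT error recurrence is dominated by `2^{2^{-t}}·γ^{1-2^{-t}}`
and converges to a limit at most `γ`. -/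
theorem stmt_3 (c₁ c₂ : ℝ) (hc₁ : 0 < c₁) (hc₂ : 0 < c₂)
    (c : ℝ) (hc : c = 4 * (c₁ + Real.sqrt (c₁ ^ 2 + c₂)) ^ 2)
    (γ : ℝ) (hγ : γ ∈ Set.Ioc (0 : ℝ) 1)
    (e : ℕ → ℝ) (he0 : e 0 = 2)
    (heS : ∀ t : ℕ, e (t + 1) = 4 * c₁ * Real.sqrt ((γ / c) * e t) + 4 * c₂ * γ / c) :
    (∀ t : ℕ, e t ≤ (2 : ℝ) ^ ((2 : ℝ) ^ (-(t : ℝ))) * γ ^ (1 - (2 : ℝ) ^ (-(t : ℝ)))) ∧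
    ∃ L : ℝ, Filter.Tendsto e Filter.atTop (nhds L) ∧ L ≤ γ := by
  obtain ⟨hγ0, hγ1⟩ := hγ
  set s := Real.sqrt (c₁ ^ 2 + c₂) with hsdef
  have hs2 : s ^ 2 = c₁ ^ 2 + c₂ := Real.sq_sqrt (by positivity)
  have hspos : 0 < s := Real.sqrt_pos.mpr (by positivity)
  have hcpos : 0 < c := by rw [hc]; positivity
  set r := Real.sqrt c with hrdef
  have hr2 : r ^ 2 = c := Real.sq_sqrt hcpos.le
  have hrpos : 0 < r := Real.sqrt_pos.mpr hcpos
  have hr : r = 2 * (c₁ + s) := by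
    rw [hrdef, hc, show 4 * (c₁ + s) ^ 2 = (2 * (c₁ + s)) ^ 2 by ring]
    exact Real.sqrt_sq (by positivity)
  have hkey : 4 * c₁ * r + 4 * c₂ = c := by
    rw [hr, hc]; linear_combination (-4) * hs2
  have hkey' : 4 * c₁ * r + 4 * c₂ = r ^ 2 := by rw [hr2]; exact hkey
  -- lower bound
  have hlow : ∀ t, γ ≤ e t := by
    intro t
    induction t with
    | zero => rw [he0]; linarith
    | succ t ih =>
      rw [heS t]
      have h1 : Real.sqrt ((γ / c) * γ) ≤ Real.sqrt ((γ / c) * e t) :=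
        Real.sqrt_le_sqrt (mul_le_mul_of_nonneg_left ih (by positivity))
      have h2 : Real.sqrt ((γ / c) * γ) = γ / r := by
        rw [show (γ / c) * γ = (γ / r) ^ 2 by rw [div_pow, hr2]; ring]
        exact Real.sqrt_sq (by positivity)
      have h3 : γ = 4 * c₁ * (γ / r) + 4 * c₂ * γ / c := by
        rw [← hr2]; field_simp; linear_combination (-1) * hkey'
      nlinarith [h1, h2, h3, hc₁.le]
  -- upper bound
  set B : ℕ → ℝ := fun t => (2 : ℝ) ^ ((2 : ℝ) ^ (-(t : ℝ))) * γ ^ (1 - (2 : ℝ) ^ (-(t : ℝ)))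
    with hBdef
  have hBpos : ∀ t, 0 < B t := fun t => by
    apply mul_pos (Real.rpow_pos_of_pos two_pos _) (Real.rpow_pos_of_pos hγ0 _)
  have hhalf : ∀ t : ℕ, (2 : ℝ) ^ (-((t : ℝ) + 1)) = (2 : ℝ) ^ (-(t : ℝ)) / 2 := by
    intro t
    rw [show -((t : ℝ) + 1) = -(t : ℝ) + (-1) by ring, Real.rpow_add two_pos,
      Real.rpow_neg_one]
    ring
  have hγle : ∀ t : ℕ, γ ≤ B t := by
    intro t
    have h1 : γ ^ (1 : ℝ) ≤ γ ^ (1 - (2 : ℝ) ^ (-(t : ℝ))) := by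
      apply Real.rpow_le_rpow_of_exponent_ge hγ0 hγ1
      have : (0 : ℝ) < (2 : ℝ) ^ (-(t : ℝ)) := Real.rpow_pos_of_pos two_pos _
      linarith
    have h2 : (1 : ℝ) ≤ (2 : ℝ) ^ ((2 : ℝ) ^ (-(t : ℝ))) :=
      Real.one_le_rpow one_le_two (Real.rpow_pos_of_pos two_pos _).le
    calc γ = γ ^ (1 : ℝ) := (Real.rpow_one γ).symm
      _ ≤ γ ^ (1 - (2 : ℝ) ^ (-(t : ℝ))) := h1
      _ ≤ B t := by
          simpa [hBdef] using
            le_mul_of_one_le_left (Real.rpow_pos_of_pos hγ0 (1 - (2 : ℝ) ^ (-(t : ℝ)))).le h2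
  have hup : ∀ t, e t ≤ B t := by
    intro t
    induction t with
    | zero =>
      rw [he0, hBdef]
      simp [Real.rpow_one]
    | succ t ih =>
      have hsq : γ * B t = (B (t + 1)) ^ 2 := by
        simp only [hBdef, Nat.cast_succ, hhalf]
        set a := (2 : ℝ) ^ (-(t : ℝ)) with hadef
        rw [pow_two,
          show ((2:ℝ) ^ (a/2) * γ ^ (1 - a/2)) * ((2:ℝ) ^ (a/2) * γ ^ (1 - a/2))
            = ((2:ℝ) ^ (a/2) * (2:ℝ) ^ (a/2)) * (γ ^ (1 - a/2) * γ ^ (1 - a/2)) by ring,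
          ← Real.rpow_add two_pos, ← Real.rpow_add hγ0,
          show a/2 + a/2 = a by ring,
          show (1 - a/2) + (1 - a/2) = 1 + (1 - a) by ring,
          Real.rpow_add hγ0, Real.rpow_one]
        ring
      have h1 : Real.sqrt ((γ / c) * e t) ≤ B (t + 1) / r := by
        have : Real.sqrt ((γ / c) * e t) ≤ Real.sqrt ((γ / c) * B t) :=
          Real.sqrt_le_sqrt (mul_le_mul_of_nonneg_left ih (by positivity))
        rw [show (γ / c) * B t = (B (t+1) / r) ^ 2 by
          rw [div_pow, hr2, ← hsq]; ring] at this
        rwa [Real.sqrt_sq (by positivity)] at this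
      rw [heS t]
      have h2 : 4 * c₁ * (B (t+1) / r) + 4 * c₂ * B (t+1) / c = B (t+1) := by
        rw [← hr2]; field_simp; linear_combination (B (t+1)) * hkey'
      have h3 : 4 * c₂ * γ / c ≤ 4 * c₂ * B (t+1) / c := by
        gcongr
        exact hγle (t+1)
      nlinarith [h1, hc₁.le]
  refine ⟨hup, γ, ?_, le_refl γ⟩
  -- convergence: squeeze between γ and B, with B → γ
  have hexp : Tendsto (fun t : ℕ => (2 : ℝ) ^ (-(t : ℝ))) atTop (nhds 0) := by
    have heq : ∀ t : ℕ, (2 : ℝ) ^ (-(t : ℝ)) = (1 / 2 : ℝ) ^ t := by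
      intro t
      rw [Real.rpow_neg (by norm_num), Real.rpow_natCast]
      simp [one_div, ← inv_pow]
    simp only [heq]
    exact tendsto_pow_atTop_nhds_zero_of_lt_one (by norm_num) (by norm_num)
  have h2lim : Tendsto (fun t : ℕ => (2 : ℝ) ^ ((2 : ℝ) ^ (-(t : ℝ)))) atTop (nhds 1) := by
    have := (Real.continuousAt_const_rpow (b := (0:ℝ)) (two_ne_zero)).tendsto.comp hexp
    simpa [Function.comp_def] using this
  have hγlim : Tendsto (fun t : ℕ => γ ^ (1 - (2 : ℝ) ^ (-(t : ℝ)))) atTop (nhds γ) := by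
    have hexp1 : Tendsto (fun t : ℕ => 1 - (2 : ℝ) ^ (-(t : ℝ))) atTop (nhds 1) := by
      simpa using tendsto_const_nhds.sub hexp
    have := (Real.continuousAt_const_rpow (b := (1:ℝ)) (ne_of_gt hγ0)).tendsto.comp hexp1
    simpa [Real.rpow_one, Function.comp_def] using this
  have hBlim : Tendsto B atTop (nhds γ) := by
    simpa [hBdef] using h2lim.mul hγlim
  exact tendsto_of_tendsto_of_tendsto_of_le_of_le tendsto_const_nhds hBlim hlow hup
end

section
/- Let ℓ ∈ ℤ₊, t > 0, u ∈ Σ_k^n, and J ⊆ {1,…,n} with |J| ≤ k, and let A⁽¹⁾,…,A⁽ℓ⁾ be i.i.d. N(0, I_n) random vectors. Define X_i = ⟨u, T'_{supp(u)∪J}(A⁽ⁱ⁾)⟩·sign(⟨u, T'_{supp(u)∪J}(A⁽ⁱ⁾)⟩) for i = 1,…,ℓ and X̄ = Σ_{i=1}^ℓ X_i. Then each X_i satisfies |X_i| = X_i (each X_i is nonnegative), and P( X̄ ≥ (√(2/π) + t)·ℓ ) ≤ exp(−ℓt²/2). -/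
open MeasureTheory ProbabilityTheory Filter
open scoped Classical Real ENNReal RealInnerProductSpace

noncomputable section

/-- Law of a standard Gaussian vector `N(0, I_n)` in `ℝⁿ`. -/
def gaussVec (n : ℕ) : Measure (Fin n → ℝ) :=
  Measure.pi fun _ : Fin n => gaussianReal 0 1

/-- Law of `ℓ` i.i.d. standard Gaussian vectors `N(0, I_n)`. -/
def gaussVecs (ℓ n : ℕ) : Measure (Fin ℓ → Fin n → ℝ) :=
  Measure.pi fun _ : Fin ℓ => gaussVec n

lemma mul_sgn_self (a : ℝ) : a * sgn a = |a| := by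
  unfold sgn; split_ifs with h
  · rw [abs_of_neg h]; ring
  · rw [abs_of_nonneg (le_of_not_gt h)]; ring

/-- lintegral of a product of functions of separate coordinates over a finite product measure. -/

lemma lintegral_pi_prod {α : Type*} [MeasurableSpace α] (ν : Measure α) [SigmaFinite ν] :
    ∀ (m : ℕ) (f : Fin m → α → ℝ≥0∞), (∀ i, Measurable (f i)) →
      ∫⁻ ω, ∏ i, f i (ω i) ∂(Measure.pi fun _ : Fin m => ν) = ∏ i, ∫⁻ x, f i x ∂ν := by
  intro m
  induction m with
  | zero =>
      intro f hf
      simp [lintegral_const, Measure.pi_univ]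
  | succ m ih =>
      intro f hf
      have h0 := measurePreserving_piFinSuccAbove (fun _ : Fin (m + 1) => ν) 0
      have hmeas : Measurable fun ω : Fin (m + 1) → α => ∏ i, f i (ω i) :=
        Finset.measurable_prod _ fun i _ => (hf i).comp (measurable_pi_apply i)
      have hsymm := (MeasurePreserving.symm _ h0).lintegral_comp hmeas
      rw [← hsymm]
      have hpt : ∀ p : α × (Fin m → α),
          (∏ i, f i (((MeasurableEquiv.piFinSuccAbove (fun _ : Fin (m+1) => α) 0).symm p) i))
            = f 0 p.1 * ∏ j, f ((0 : Fin (m+1)).succAbove j) (p.2 j) := by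
        intro p
        rw [Fin.prod_univ_succAbove _ 0]
        simp [MeasurableEquiv.piFinSuccAbove]
      simp only [hpt]
      rw [lintegral_prod_mul (f := f 0)
        (g := fun y : Fin m → α => ∏ j, f ((0 : Fin (m+1)).succAbove j) (y j))
        (hf 0).aemeasurable
        (Finset.measurable_prod _ fun j _ =>
          (hf _).comp (measurable_pi_apply j)).aemeasurable]
      rw [ih (fun j => f ((0 : Fin (m+1)).succAbove j)) (fun j => hf _)]
      rw [Fin.prod_univ_succAbove (fun i => ∫⁻ x, f i x ∂ν) 0]

/-- map of a withDensity measure under a measurable equiv. -/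

lemma map_withDensity_equiv {α β : Type*} [MeasurableSpace α] [MeasurableSpace β]
    (e : α ≃ᵐ β) (μ : Measure α) {g : β → ℝ≥0∞} (hg : Measurable g) :
    Measure.map e (μ.withDensity (g ∘ e)) = (Measure.map e μ).withDensity g := by
  ext s hs
  rw [Measure.map_apply e.measurable hs, withDensity_apply _ (e.measurable hs),
    withDensity_apply _ hs, setLIntegral_map hs hg e.measurable]
  rfl

def gE (n : ℕ) : EuclideanSpace ℝ (Fin n) → ℝ≥0∞ :=
  fun x => ENNReal.ofReal ((Real.sqrt (2 * π))⁻¹ ^ n * Real.exp (-‖x‖ ^ 2 / 2))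

lemma gE_meas (n : ℕ) : Measurable (gE n) := by
  unfold gE
  fun_prop

lemma gaussVec_eq_withDensity (n : ℕ) :
    gaussVec n = (volume : Measure (Fin n → ℝ)).withDensity
      (fun v => ∏ j, gaussianPDF 0 1 (v j)) := by
  unfold gaussVec
  refine Measure.pi_eq fun s hs => ?_
  rw [withDensity_apply _ (MeasurableSet.univ_pi hs),
    ← lintegral_indicator (f := fun v : Fin n → ℝ => ∏ j, gaussianPDF 0 1 (v j))
      (MeasurableSet.univ_pi hs)]
  have hind : ∀ v : Fin n → ℝ,
      (Set.univ.pi s).indicator (fun v => ∏ j, gaussianPDF 0 1 (v j)) v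
        = ∏ j, (s j).indicator (fun x => gaussianPDF 0 1 x) (v j) := by
    intro v
    by_cases hv : v ∈ Set.univ.pi s
    · rw [Set.indicator_of_mem hv]
      exact Finset.prod_congr rfl fun j _ =>
        (Set.indicator_of_mem (hv j (Set.mem_univ j)) _).symm
    · rw [Set.indicator_of_notMem hv]
      obtain ⟨j, hj⟩ : ∃ j, v j ∉ s j := by
        by_contra h
        push_neg at h
        exact hv fun j _ => h j
      exact (Finset.prod_eq_zero (Finset.mem_univ j)
        (by rw [Set.indicator_of_notMem hj])).symm
  simp_rw [hind]
  rw [show (volume : Measure (Fin n → ℝ)) = Measure.pi fun _ => volume from volume_pi]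
  rw [lintegral_pi_prod volume n _
    (fun j => (measurable_gaussianPDF 0 1).indicator (hs j))]
  refine Finset.prod_congr rfl fun j _ => ?_
  rw [lintegral_indicator (hs j) _, ← withDensity_apply _ (hs j),
    ← gaussianReal_of_var_ne_zero 0 one_ne_zero]

lemma map_symm_gaussVec (n : ℕ) :
    Measure.map ((MeasurableEquiv.toLp 2 (Fin n → ℝ)).symm).symm (gaussVec n)
      = (volume : Measure (EuclideanSpace ℝ (Fin n))).withDensity (gE n) := by
  rw [gaussVec_eq_withDensity]
  have hfun : (fun v : Fin n → ℝ => ∏ j, gaussianPDF 0 1 (v j))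
      = gE n ∘ ((MeasurableEquiv.toLp 2 (Fin n → ℝ)).symm).symm := by
    funext v
    have hnorm : ‖((MeasurableEquiv.toLp 2 (Fin n → ℝ)).symm).symm v‖ ^ 2 = ∑ j, (v j) ^ 2 := by
      rw [EuclideanSpace.norm_eq, Real.sq_sqrt (Finset.sum_nonneg fun j _ => by positivity)]
      simp [sq_abs]
    simp only [Function.comp_apply, gE, hnorm]
    unfold gaussianPDF gaussianPDFReal
    rw [← ENNReal.ofReal_prod_of_nonneg (fun j _ => by positivity)]
    congr 1
    simp only [NNReal.coe_one, mul_one, sub_zero]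
    rw [Finset.prod_mul_distrib, Finset.prod_const, Finset.card_univ, Fintype.card_fin,
      ← Real.exp_sum]
    congr 1
    rw [← Finset.sum_div, ← Finset.sum_neg_distrib]
  rw [hfun, map_withDensity_equiv _ _ (gE_meas n),
    (MeasurePreserving.symm _
      (EuclideanSpace.volume_preserving_symm_measurableEquiv_toLp (Fin n))).map_eq]

lemma map_isometry_gaussE {n : ℕ}
    (f : EuclideanSpace ℝ (Fin n) ≃ₗᵢ[ℝ] EuclideanSpace ℝ (Fin n)) :
    Measure.map f ((volume : Measure (EuclideanSpace ℝ (Fin n))).withDensity (gE n))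
      = (volume : Measure (EuclideanSpace ℝ (Fin n))).withDensity (gE n) := by
  have hcomp : gE n ∘ ⇑f.toHomeomorph.toMeasurableEquiv = gE n := by
    funext x
    simp [gE, f.norm_map]
  have h1 : Measure.map (⇑f.toHomeomorph.toMeasurableEquiv)
      ((volume : Measure (EuclideanSpace ℝ (Fin n))).withDensity
        (gE n ∘ ⇑f.toHomeomorph.toMeasurableEquiv))
      = (Measure.map (⇑f.toHomeomorph.toMeasurableEquiv)
          (volume : Measure (EuclideanSpace ℝ (Fin n)))).withDensity (gE n) :=
    map_withDensity_equiv _ _ (gE_meas n)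
  rw [hcomp] at h1
  have h2 : Measure.map (⇑f.toHomeomorph.toMeasurableEquiv)
      (volume : Measure (EuclideanSpace ℝ (Fin n))) = volume :=
    f.measurePreserving.map_eq
  rw [h2] at h1
  exact h1

lemma map_eval_pi {n : ℕ} (i0 : Fin n) :
    Measure.map (fun v : Fin n → ℝ => v i0) (gaussVec n) = gaussianReal 0 1 := by
  ext s hs
  rw [Measure.map_apply (measurable_pi_apply i0) hs]
  unfold gaussVec
  rw [show (fun v : Fin n → ℝ => v i0) ⁻¹' s
      = Set.univ.pi (Function.update (fun _ => Set.univ) i0 s) from Set.eval_preimage,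
    Measure.pi_pi]
  have hj : ∀ j, (gaussianReal 0 1) (Function.update (fun _ => Set.univ) i0 s j)
      = if j = i0 then (gaussianReal 0 1) s else 1 := by
    intro j
    rcases eq_or_ne j i0 with h | h
    · rw [h, Function.update_self, if_pos rfl]
    · rw [Function.update_of_ne h, if_neg h, measure_univ]
  simp_rw [hj]
  rw [Finset.prod_eq_single i0 (fun b _ hb => if_neg hb)
    (fun h => absurd (Finset.mem_univ i0) h), if_pos rfl]

lemma gaussVec_map_inner {n : ℕ} (u : EuclideanSpace ℝ (Fin n)) (hu : ‖u‖ = 1) :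
    Measure.map (fun v : Fin n → ℝ => (⟪u, toE v⟫ : ℝ)) (gaussVec n) = gaussianReal 0 1 := by
  have hne : Nonempty (Fin n) := by
    rcases isEmpty_or_nonempty (Fin n) with h | h
    · exfalso
      have hu0 : u = 0 := Subsingleton.elim u 0
      rw [hu0, norm_zero] at hu
      norm_num at hu
    · exact h
  set i0 := Classical.arbitrary (Fin n) with hi0
  set E1 : EuclideanSpace ℝ (Fin n) := EuclideanSpace.single i0 1 with hE1
  have hnorm1 : ‖u‖ = ‖E1‖ := by
    rw [hu, hE1, EuclideanSpace.norm_single]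
    norm_num
  set R := Submodule.reflection (ℝ ∙ (u - E1))ᗮ with hRdef
  have hRu : R u = E1 := Submodule.reflection_sub hnorm1
  have hinner : ∀ x : EuclideanSpace ℝ (Fin n), (⟪u, x⟫ : ℝ) = R x i0 := by
    intro x
    rw [← LinearIsometryEquiv.inner_map_map R, hRu, hE1, EuclideanSpace.inner_single_left]
    simp
  set e := (MeasurableEquiv.toLp 2 (Fin n → ℝ)).symm with he
  have hfun : (fun v : Fin n → ℝ => (⟪u, toE v⟫ : ℝ))
      = (fun w : Fin n → ℝ => w i0) ∘ ⇑e ∘ ⇑R ∘ ⇑e.symm := by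
    funext v
    simp only [Function.comp_apply]
    rw [hinner]
    rfl
  have m1 : Measurable (⇑e.symm) := e.symm.measurable
  have m2 : Measurable (⇑R) := R.continuous.measurable
  have m3 : Measurable (⇑e) := e.measurable
  have m4 : Measurable (fun w : Fin n → ℝ => w i0) := measurable_pi_apply i0
  rw [hfun, ← Measure.map_map m4 (m3.comp (m2.comp m1)), ← Measure.map_map m3 (m2.comp m1),
    ← Measure.map_map m2 m1, map_symm_gaussVec, map_isometry_gaussE R]
  have hback : Measure.map (⇑e) ((volume : Measure (EuclideanSpace ℝ (Fin n))).withDensity (gE n))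
      = gaussVec n := by
    rw [← map_symm_gaussVec n, Measure.map_map m3 m1, MeasurableEquiv.self_comp_symm,
      Measure.map_id]
  rw [hback, map_eval_pi i0]

lemma gauss_abs_exp_bound {s : ℝ} (hs : 0 ≤ s) :
    ∫⁻ y, ENNReal.ofReal (Real.exp (s * |y|)) ∂(gaussianReal 0 1)
      ≤ ENNReal.ofReal (Real.exp (Real.sqrt (2 / π) * s + s ^ 2 / 2)) := by
  have hγ : gaussianReal 0 1 = (volume : Measure ℝ).withDensity (gaussianPDF 0 1) :=
    gaussianReal_of_var_ne_zero 0 one_ne_zero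
  have hgm : Measurable fun y : ℝ => ENNReal.ofReal (Real.exp (s * |y|)) := by fun_prop
  rw [hγ, lintegral_withDensity_eq_lintegral_mul _ (measurable_gaussianPDF 0 1) hgm]
  -- pointwise rewrite into single ofReal
  have hpdf_nonneg : ∀ y : ℝ, 0 ≤ gaussianPDFReal 0 1 y := fun y => gaussianPDFReal_nonneg 0 1 y
  -- split the line
  rw [← lintegral_add_compl
    (f := fun y => (gaussianPDF 0 1 * fun y => ENNReal.ofReal (Real.exp (s * |y|))) y)
    (measurableSet_Ici (a := (0:ℝ)))]
  have hIci : ∫⁻ y in Set.Ici (0:ℝ),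
      (gaussianPDF 0 1 * fun y => ENNReal.ofReal (Real.exp (s * |y|))) y
      = ENNReal.ofReal (Real.exp (s ^ 2 / 2)) * (gaussianReal 0 1) (Set.Ici (-s)) := by
    have h1 : ∫⁻ y in Set.Ici (0:ℝ),
        (gaussianPDF 0 1 * fun y => ENNReal.ofReal (Real.exp (s * |y|))) y
        = ∫⁻ y in Set.Ici (0:ℝ),
            ENNReal.ofReal (Real.exp (s ^ 2 / 2)) * gaussianPDF 0 1 (y - s) := by
      refine setLIntegral_congr_fun measurableSet_Ici ?_
      intro y hy
      simp only [Pi.mul_apply, gaussianPDF, abs_of_nonneg (Set.mem_Ici.1 hy)]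
      rw [← ENNReal.ofReal_mul (hpdf_nonneg y), ← ENNReal.ofReal_mul (Real.exp_nonneg _)]
      congr 1
      unfold gaussianPDFReal
      simp only [NNReal.coe_one, mul_one, sub_zero]
      rw [mul_assoc, ← Real.exp_add, mul_comm (Real.exp (s^2/2)), mul_assoc, ← Real.exp_add]
      congr 2
      ring
    rw [h1, lintegral_const_mul _ (show Measurable fun y : ℝ => gaussianPDF 0 1 (y - s) from (measurable_gaussianPDF 0 1).comp (measurable_id.sub_const s))]
    congr 1
    -- shift invariance
    rw [← lintegral_indicator measurableSet_Ici _]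
    have h2 : (Set.Ici (0:ℝ)).indicator (fun y => gaussianPDF 0 1 (y - s))
        = fun y => (Set.Ici (-s)).indicator (gaussianPDF 0 1) (y + -s) := by
      funext y
      have hiff : y ∈ Set.Ici (0:ℝ) ↔ y + -s ∈ Set.Ici (-s) := by
        simp only [Set.mem_Ici]
        constructor <;> intro <;> linarith
      by_cases hy : y ∈ Set.Ici (0:ℝ)
      · rw [Set.indicator_of_mem hy, Set.indicator_of_mem (hiff.1 hy)]
        simp [sub_eq_add_neg]
      · rw [Set.indicator_of_notMem hy, Set.indicator_of_notMem (fun h => hy (hiff.2 h))]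
    rw [h2, lintegral_add_right_eq_self (f := (Set.Ici (-s)).indicator (gaussianPDF 0 1)) (-s),
      lintegral_indicator measurableSet_Ici _, hγ, withDensity_apply _ measurableSet_Ici]
  have hIio : ∫⁻ y in (Set.Ici (0:ℝ))ᶜ,
      (gaussianPDF 0 1 * fun y => ENNReal.ofReal (Real.exp (s * |y|))) y
      = ENNReal.ofReal (Real.exp (s ^ 2 / 2)) * (gaussianReal 0 1) (Set.Iio s) := by
    rw [Set.compl_Ici]
    have h1 : ∫⁻ y in Set.Iio (0:ℝ),
        (gaussianPDF 0 1 * fun y => ENNReal.ofReal (Real.exp (s * |y|))) y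
        = ∫⁻ y in Set.Iio (0:ℝ),
            ENNReal.ofReal (Real.exp (s ^ 2 / 2)) * gaussianPDF 0 1 (y + s) := by
      refine setLIntegral_congr_fun measurableSet_Iio ?_
      intro y hy
      simp only [Pi.mul_apply, gaussianPDF, abs_of_neg (Set.mem_Iio.1 hy)]
      rw [← ENNReal.ofReal_mul (hpdf_nonneg y), ← ENNReal.ofReal_mul (Real.exp_nonneg _)]
      congr 1
      unfold gaussianPDFReal
      simp only [NNReal.coe_one, mul_one, sub_zero]
      rw [mul_assoc, ← Real.exp_add, mul_comm (Real.exp (s^2/2)), mul_assoc, ← Real.exp_add]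
      congr 2
      ring
    rw [h1, lintegral_const_mul _ (show Measurable fun y : ℝ => gaussianPDF 0 1 (y + s) from (measurable_gaussianPDF 0 1).comp (measurable_id.add_const s))]
    congr 1
    rw [← lintegral_indicator measurableSet_Iio _]
    have h2 : (Set.Iio (0:ℝ)).indicator (fun y => gaussianPDF 0 1 (y + s))
        = fun y => (Set.Iio s).indicator (gaussianPDF 0 1) (y + s) := by
      funext y
      have hiff : y ∈ Set.Iio (0:ℝ) ↔ y + s ∈ Set.Iio s := by
        simp only [Set.mem_Iio]
        constructor <;> intro <;> linarith
      by_cases hy : y ∈ Set.Iio (0:ℝ)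
      · rw [Set.indicator_of_mem hy, Set.indicator_of_mem (hiff.1 hy)]
      · rw [Set.indicator_of_notMem hy, Set.indicator_of_notMem (fun h => hy (hiff.2 h))]
    rw [h2, lintegral_add_right_eq_self (f := (Set.Iio s).indicator (gaussianPDF 0 1)) s,
      lintegral_indicator measurableSet_Iio _, hγ, withDensity_apply _ measurableSet_Iio]
  rw [hIci, hIio, ← mul_add]
  -- bound the measures
  have hmeas_sum : (gaussianReal 0 1) (Set.Ici (-s)) + (gaussianReal 0 1) (Set.Iio s)
      ≤ 1 + ENNReal.ofReal (Real.sqrt (2 / π) * s) := by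
    have hunion : (gaussianReal 0 1) (Set.Iio s)
        = (gaussianReal 0 1) (Set.Iio (-s)) + (gaussianReal 0 1) (Set.Ico (-s) s) := by
      rw [← measure_union (by
          refine Set.disjoint_left.2 fun x hx hx' => ?_
          exact absurd hx'.1 (not_le.2 hx)) measurableSet_Ico,
        Set.Iio_union_Ico_eq_Iio (by linarith)]
    have hcompl : (gaussianReal 0 1) (Set.Ici (-s)) + (gaussianReal 0 1) (Set.Iio (-s)) = 1 := by
      rw [← Set.compl_Ici (a := -s), measure_add_measure_compl measurableSet_Ici, measure_univ]
    have hIco : (gaussianReal 0 1) (Set.Ico (-s) s) ≤ ENNReal.ofReal (Real.sqrt (2 / π) * s) := by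
      rw [hγ, withDensity_apply _ measurableSet_Ico]
      have hb : ∀ y ∈ Set.Ico (-s) s, gaussianPDF 0 1 y
          ≤ ENNReal.ofReal (Real.sqrt (2 * π))⁻¹ := by
        intro y _
        simp only [gaussianPDF]
        apply ENNReal.ofReal_le_ofReal
        unfold gaussianPDFReal
        simp only [NNReal.coe_one, mul_one, sub_zero]
        nth_rewrite 2 [← mul_one (Real.sqrt (2 * π))⁻¹]
        apply mul_le_mul_of_nonneg_left _ (by positivity)
        rw [Real.exp_le_one_iff]
        nlinarith [sq_nonneg y]
      calc ∫⁻ y in Set.Ico (-s) s, gaussianPDF 0 1 y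
          ≤ ∫⁻ _ in Set.Ico (-s) s, ENNReal.ofReal (Real.sqrt (2 * π))⁻¹ :=
            setLIntegral_mono (by fun_prop) hb
        _ = ENNReal.ofReal (Real.sqrt (2 * π))⁻¹ * volume (Set.Ico (-s) s) := by
            rw [setLIntegral_const]
        _ = ENNReal.ofReal (Real.sqrt (2 * π))⁻¹ * ENNReal.ofReal (s - -s) := by
            rw [Real.volume_Ico]
        _ ≤ ENNReal.ofReal (Real.sqrt (2 / π) * s) := by
            rw [← ENNReal.ofReal_mul (by positivity)]
            apply ENNReal.ofReal_le_ofReal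
            have h2π : (0:ℝ) < Real.sqrt (2 * π) := Real.sqrt_pos.2 (by positivity)
            have hq : Real.sqrt (2 / π) * Real.sqrt (2 * π) = 2 := by
              rw [← Real.sqrt_mul (by positivity)]
              rw [show 2 / π * (2 * π) = 4 by field_simp; ring]
              rw [show (4:ℝ) = 2^2 by norm_num, Real.sqrt_sq (by norm_num)]
            rw [inv_mul_eq_div, div_le_iff₀ h2π]
            nlinarith [hq]
    calc (gaussianReal 0 1) (Set.Ici (-s)) + (gaussianReal 0 1) (Set.Iio s)
        = ((gaussianReal 0 1) (Set.Ici (-s)) + (gaussianReal 0 1) (Set.Iio (-s)))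
            + (gaussianReal 0 1) (Set.Ico (-s) s) := by rw [hunion]; ring
      _ = 1 + (gaussianReal 0 1) (Set.Ico (-s) s) := by rw [hcompl]
      _ ≤ 1 + ENNReal.ofReal (Real.sqrt (2 / π) * s) := add_le_add_right hIco _
  calc ENNReal.ofReal (Real.exp (s ^ 2 / 2))
        * ((gaussianReal 0 1) (Set.Ici (-s)) + (gaussianReal 0 1) (Set.Iio s))
      ≤ ENNReal.ofReal (Real.exp (s ^ 2 / 2))
        * (1 + ENNReal.ofReal (Real.sqrt (2 / π) * s)) := by
        exact mul_le_mul_right hmeas_sum _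
    _ = ENNReal.ofReal (Real.exp (s ^ 2 / 2) * (1 + Real.sqrt (2 / π) * s)) := by
        rw [ENNReal.ofReal_mul (Real.exp_nonneg _), ENNReal.ofReal_add (by norm_num)
          (by positivity), ENNReal.ofReal_one]
    _ ≤ ENNReal.ofReal (Real.exp (s ^ 2 / 2) * Real.exp (Real.sqrt (2 / π) * s)) := by
        apply ENNReal.ofReal_le_ofReal
        apply mul_le_mul_of_nonneg_left _ (Real.exp_nonneg _)
        have := Real.add_one_le_exp (Real.sqrt (2 / π) * s)
        linarith
    _ = ENNReal.ofReal (Real.exp (Real.sqrt (2 / π) * s + s ^ 2 / 2)) := by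
        rw [← Real.exp_add, add_comm]

/-- concentration of `X̄ = Σᵢ ⟨u, T'(A⁽ⁱ⁾)⟩·sign(⟨u, T'(A⁽ⁱ⁾)⟩)`. -/
theorem stmt_8 {n k : ℕ} (ℓ : ℕ) (hℓ : 0 < ℓ) (t : ℝ) (ht : 0 < t)
    (u : EuclideanSpace ℝ (Fin n)) (hu : u ∈ SparseUnit k n)
    (J : Set (Fin n)) (hJ : J.ncard ≤ k)
    (X : Fin ℓ → (Fin ℓ → Fin n → ℝ) → ℝ)
    (hX : ∀ i ω, X i ω = ⟪u, thresh (spt u ∪ J) (toE (ω i))⟫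
            * sgn ⟪u, thresh (spt u ∪ J) (toE (ω i))⟫) :
    (∀ (ω : Fin ℓ → Fin n → ℝ) (i : Fin ℓ), |X i ω| = X i ω) ∧
    gaussVecs ℓ n {ω | (Real.sqrt (2 / Real.pi) + t) * ℓ ≤ ∑ i, X i ω} ≤
      ENNReal.ofReal (Real.exp (-(ℓ * t ^ 2) / 2)) := by
  have hu1 : ‖u‖ = 1 := hu.1
  have hinner : ∀ w : Fin n → ℝ,
      (⟪u, thresh (spt u ∪ J) (toE w)⟫ : ℝ) = ⟪u, toE w⟫ := by
    intro w
    simp only [PiLp.inner_apply, RCLike.inner_apply, conj_trivial]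
    refine Finset.sum_congr rfl fun j _ => ?_
    by_cases hj : u j = 0
    · simp [hj]
    · have hjm : j ∈ spt u ∪ J := Or.inl hj
      simp only [thresh, toE]
      rw [if_pos hjm]
  have hXabs : ∀ i ω, X i ω = |(⟪u, toE (ω i)⟫ : ℝ)| := by
    intro i ω
    rw [hX, hinner, mul_sgn_self]
  refine ⟨fun ω i => by rw [hXabs]; exact abs_abs _, ?_⟩
  haveI hiPn : IsProbabilityMeasure (gaussVec n) := by
    unfold gaussVec; infer_instance
  set μ0 : ℝ := Real.sqrt (2 / π) with hμ0
  set c : ℝ := (μ0 + t) * (ℓ : ℝ) with hc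
  have hWmeas : Measurable fun v : Fin n → ℝ => (⟪u, toE v⟫ : ℝ) := by
    have hw : (fun v : Fin n → ℝ => (⟪u, toE v⟫ : ℝ)) = fun v => ∑ j, u j * v j := by
      funext v
      simp [PiLp.inner_apply, RCLike.inner_apply, toE, mul_comm]
    rw [hw]
    exact Finset.measurable_sum _ fun j _ => by fun_prop
  set S : (Fin ℓ → Fin n → ℝ) → ℝ := fun ω => ∑ i, |(⟪u, toE (ω i)⟫ : ℝ)| with hSdef
  have hSmeas : Measurable S :=
    Finset.measurable_sum _ fun i _ => (hWmeas.comp (measurable_pi_apply i)).abs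
  have hset : {ω : Fin ℓ → Fin n → ℝ | c ≤ ∑ i, X i ω} = {ω | c ≤ S ω} := by
    ext ω
    simp only [Set.mem_setOf_eq, hSdef]
    rw [Finset.sum_congr rfl fun i (_ : i ∈ Finset.univ) => hXabs i ω]
  have hf : Measurable fun ω => ENNReal.ofReal (Real.exp (t * S ω)) :=
    ((hSmeas.const_mul t).exp).ennreal_ofReal
  have hmark := mul_meas_ge_le_lintegral₀ (μ := gaussVecs ℓ n) hf.aemeasurable
      (ENNReal.ofReal (Real.exp (t * c)))
  have hsub : gaussVecs ℓ n {ω | c ≤ S ω}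
      ≤ gaussVecs ℓ n {ω | ENNReal.ofReal (Real.exp (t * c))
          ≤ ENNReal.ofReal (Real.exp (t * S ω))} := by
    apply measure_mono
    intro ω hω
    exact ENNReal.ofReal_le_ofReal (Real.exp_le_exp.2 (mul_le_mul_of_nonneg_left hω ht.le))
  have hlin : ∫⁻ ω, ENNReal.ofReal (Real.exp (t * S ω)) ∂(gaussVecs ℓ n)
      ≤ ENNReal.ofReal (Real.exp (ℓ * (μ0 * t + t ^ 2 / 2))) := by
    have hexp : ∀ ω : Fin ℓ → Fin n → ℝ, ENNReal.ofReal (Real.exp (t * S ω))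
        = ∏ i, ENNReal.ofReal (Real.exp (t * |(⟪u, toE (ω i)⟫ : ℝ)|)) := by
      intro ω
      simp only [hSdef]
      rw [Finset.mul_sum, Real.exp_sum,
        ENNReal.ofReal_prod_of_nonneg (fun i _ => Real.exp_nonneg _)]
    simp_rw [hexp]
    rw [show gaussVecs ℓ n = Measure.pi fun _ : Fin ℓ => gaussVec n from rfl]
    rw [lintegral_pi_prod (gaussVec n) ℓ
      (fun _ v => ENNReal.ofReal (Real.exp (t * |(⟪u, toE v⟫ : ℝ)|)))
      (fun _ => ((hWmeas.abs.const_mul t).exp).ennreal_ofReal)]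
    rw [Finset.prod_const, Finset.card_univ, Fintype.card_fin]
    have hone : ∫⁻ v, ENNReal.ofReal (Real.exp (t * |(⟪u, toE v⟫ : ℝ)|)) ∂(gaussVec n)
        ≤ ENNReal.ofReal (Real.exp (μ0 * t + t ^ 2 / 2)) := by
      have hmapped := lintegral_map (μ := gaussVec n)
        (f := fun y : ℝ => ENNReal.ofReal (Real.exp (t * |y|)))
        (g := fun v : Fin n → ℝ => (⟪u, toE v⟫ : ℝ))
        (by fun_prop) hWmeas
      rw [gaussVec_map_inner u hu1] at hmapped
      rw [← hmapped]
      exact gauss_abs_exp_bound ht.le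
    calc (∫⁻ v, ENNReal.ofReal (Real.exp (t * |(⟪u, toE v⟫ : ℝ)|)) ∂(gaussVec n)) ^ ℓ
        ≤ (ENNReal.ofReal (Real.exp (μ0 * t + t ^ 2 / 2))) ^ ℓ := pow_le_pow_left' hone ℓ
      _ = ENNReal.ofReal (Real.exp (μ0 * t + t ^ 2 / 2) ^ ℓ) :=
          (ENNReal.ofReal_pow (Real.exp_nonneg _) ℓ).symm
      _ = ENNReal.ofReal (Real.exp (ℓ * (μ0 * t + t ^ 2 / 2))) := by rw [Real.exp_nat_mul]
  rw [hset]
  have hchain : ENNReal.ofReal (Real.exp (t * c)) * gaussVecs ℓ n {ω | c ≤ S ω}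
      ≤ ENNReal.ofReal (Real.exp (ℓ * (μ0 * t + t ^ 2 / 2))) :=
    le_trans (mul_le_mul_right hsub _) (le_trans hmark hlin)
  have hε0 : (ENNReal.ofReal (Real.exp (t * c))) ≠ 0 := by
    simp [ENNReal.ofReal_eq_zero, not_le, Real.exp_pos]
  have hεt : (ENNReal.ofReal (Real.exp (t * c))) ≠ ⊤ := ENNReal.ofReal_ne_top
  rw [mul_comm] at hchain
  have hdiv := (ENNReal.le_div_iff_mul_le (Or.inl hε0) (Or.inl hεt)).2 hchain
  refine le_trans hdiv ?_
  rw [← ENNReal.ofReal_div_of_pos (Real.exp_pos _), ← Real.exp_sub]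
  apply ENNReal.ofReal_le_ofReal
  apply Real.exp_le_exp.2
  apply le_of_eq
  rw [hc]
  ring
end
end

section
/- Let k, n ∈ ℤ₊ with k ≤ n, let z ∈ Σ_k^n and v ∈ Σ_k^n, and let w ∈ ℝⁿ be such that v + w has at least k nonzero entries. Let u = T_k(v + w)/‖T_k(v + w)‖₂ ∈ Σ_k^n. Then ‖z − u‖₂ ≤ 4·‖(z − v) − T'_{supp(z) ∪ supp(u) ∪ supp(v)}(w)‖₂. -/
open MeasureTheory ProbabilityTheory Filter
open scoped Classical Real ENNReal RealInnerProductSpace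

noncomputable section

lemma key_sum {n : ℕ} (b : Fin n → ℝ) (S T : Finset (Fin n))
    (hcard : T.card ≤ S.card) (hS : S.Nonempty)
    (hmax : ∀ i ∈ S, ∀ j ∉ S, |b j| ≤ |b i|) :
    ∑ j ∈ T, b j ^ 2 ≤ ∑ j ∈ S, b j ^ 2 := by
  set m : ℝ := S.inf' hS (fun i => b i ^ 2) with hm
  have hm0 : 0 ≤ m := Finset.le_inf' hS _ (fun i _ => sq_nonneg _)
  have hub : ∀ j ∉ S, b j ^ 2 ≤ m := by
    intro j hj
    apply Finset.le_inf' hS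
    intro i hi
    calc b j ^ 2 = |b j| ^ 2 := (sq_abs _).symm
    _ ≤ |b i| ^ 2 := pow_le_pow_left₀ (abs_nonneg _) (hmax i hi j hj) 2
    _ = b i ^ 2 := sq_abs _
  have hcards : (T \ S).card ≤ (S \ T).card := by
    have h1 := Finset.card_sdiff_add_card_inter T S
    have h2 := Finset.card_sdiff_add_card_inter S T
    have h3 : (T ∩ S).card = (S ∩ T).card := by rw [Finset.inter_comm]
    omega
  have h1 : ∑ j ∈ T \ S, b j ^ 2 ≤ ∑ j ∈ S \ T, b j ^ 2 := by
    calc ∑ j ∈ T \ S, b j ^ 2 ≤ (T \ S).card • m :=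
          Finset.sum_le_card_nsmul _ _ _ fun j hj => hub j (Finset.mem_sdiff.1 hj).2
    _ ≤ (S \ T).card • m := by
          simp only [nsmul_eq_mul]
          exact mul_le_mul_of_nonneg_right (Nat.cast_le.2 hcards) hm0
    _ ≤ ∑ j ∈ S \ T, b j ^ 2 :=
          Finset.card_nsmul_le_sum _ _ _ fun j hj => Finset.inf'_le _ (Finset.mem_sdiff.1 hj).1
  have e1 := Finset.sum_inter_add_sum_sdiff T S (fun j => b j ^ 2)
  have e2 := Finset.sum_inter_add_sum_sdiff S T (fun j => b j ^ 2)
  have h3 : ∑ j ∈ T ∩ S, b j ^ 2 = ∑ j ∈ S ∩ T, b j ^ 2 := by rw [Finset.inter_comm]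
  linarith


/-- deterministic hard-thresholding claim: if `u` is the normalized
top-`k` thresholding of `v + w`, then `‖z − u‖ ≤ 4‖(z − v) − T'_{supp z ∪ supp u ∪ supp v}(w)‖`. -/
theorem stmt_14 {k n : ℕ} (hk : 0 < k) (hn : 0 < n) (hkn : k ≤ n)
    (z v : EuclideanSpace ℝ (Fin n))
    (hz : z ∈ SparseUnit k n) (hv : v ∈ SparseUnit k n)
    (w : EuclideanSpace ℝ (Fin n)) (hw : k ≤ (spt (v + w)).ncard)
    (u' : EuclideanSpace ℝ (Fin n)) (hu' : IsTopK k (v + w) u')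
    (u : EuclideanSpace ℝ (Fin n)) (hu : u = ‖u'‖⁻¹ • u') :
    ‖z - u‖ ≤ 4 * ‖(z - v) - thresh (spt z ∪ spt u ∪ spt v) w‖ := by
  classical
  obtain ⟨S, hScard, hSdef, hSmax⟩ := hu'
  set J : Set (Fin n) := spt z ∪ spt u ∪ spt v with hJdef
  set b : EuclideanSpace ℝ (Fin n) := v + w with hb
  have hSne : S.Nonempty := Finset.card_pos.1 (hScard ▸ hk)
  -- u' ≠ 0
  have hu'ne : u' ≠ 0 := by
    intro h0
    have hb0 : ∀ j, b j = 0 := by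
      intro j
      by_cases hjS : j ∈ S
      · have := hSdef j
        simp [hjS, h0] at this
        exact this.symm
      · obtain ⟨i, hi⟩ := hSne
        have hbi : b i = 0 := by
          have := hSdef i
          simp [hi, h0] at this
          exact this.symm
        have := hSmax i hi j hjS
        rw [hbi] at this
        simpa using abs_nonpos_iff.1 (by simpa using this)
    have : spt b = ∅ := by
      ext j; simp [spt, hb0 j]
    rw [this] at hw
    simp at hw
    omega
  have hnu' : ‖u'‖ ≠ 0 := norm_ne_zero_iff.2 hu'ne
  -- supports
  have hspt_uu' : ∀ j, u j = 0 ↔ u' j = 0 := by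
    intro j
    rw [hu]
    simp only [PiLp.smul_apply, smul_eq_mul, mul_eq_zero]
    constructor
    · rintro (h | h)
      · exact absurd h (inv_ne_zero hnu')
      · exact h
    · exact Or.inr
  have hJu' : ∀ j, j ∉ J → u' j = 0 := by
    intro j hj
    have : j ∉ spt u := fun h => hj (Or.inl (Or.inr h))
    simp only [spt, Set.mem_setOf_eq, not_not] at this
    exact (hspt_uu' j).1 this
  have hJz : ∀ j, j ∉ J → z j = 0 := by
    intro j hj
    have : j ∉ spt z := fun h => hj (Or.inl (Or.inl h))
    simpa [spt, Set.mem_setOf_eq, not_not] using this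
  have hJv : ∀ j, j ∉ J → v j = 0 := by
    intro j hj
    have : j ∉ spt v := fun h => hj (Or.inr h)
    simpa [spt, Set.mem_setOf_eq, not_not] using this
  set bJ : EuclideanSpace ℝ (Fin n) := thresh J b with hbJ
  -- z - bJ = e
  have hzbJ : z - bJ = (z - v) - thresh J w := by
    ext j
    by_cases hj : j ∈ J
    · simp [hbJ, thresh, hj, hb]
      ring
    · simp [hbJ, thresh, hj, hb, hJz j hj, hJv j hj]
  -- finsets
  set T : Finset (Fin n) := Finset.univ.filter (fun j => z j ≠ 0) with hT
  have hTJ : ∀ j ∈ T, j ∈ J := by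
    intro j hj
    simp only [hT, Finset.mem_filter] at hj
    exact Or.inl (Or.inl hj.2)
  have hTcard : T.card ≤ k := by
    have : spt z = ↑T := by ext j; simp [spt, hT]
    have := hz.2
    rwa [‹spt z = ↑T›, Set.ncard_coe_finset] at this
  set JF : Finset (Fin n) := Finset.univ.filter (fun j => j ∈ J) with hJF
  -- the sum inequality
  have hsum : ∑ j, (u' j - bJ j) ^ 2 ≤ ∑ j, (z j - bJ j) ^ 2 := by
    have lhs_eq : ∑ j, (u' j - bJ j) ^ 2 = ∑ j ∈ JF \ S, b j ^ 2 := by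
      rw [← Finset.univ_inter (JF \ S), ← Finset.sum_ite_mem]
      apply Finset.sum_congr rfl
      intro j _
      by_cases hjJ : j ∈ J
      · by_cases hjS : j ∈ S <;>
          simp [hSdef j, hbJ, thresh, hjJ, hjS, hJF, Finset.mem_sdiff]
      · have h1 := hJu' j hjJ
        rw [hSdef j] at h1
        by_cases hjS : j ∈ S
        · simp only [hjS, if_true] at h1
          simp [hSdef j, hbJ, thresh, hjJ, hjS, hJF, Finset.mem_sdiff, h1]
        · simp [hSdef j, hbJ, thresh, hjJ, hjS, hJF, Finset.mem_sdiff]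
    have rhs_ge : ∑ j ∈ JF \ T, b j ^ 2 ≤ ∑ j, (z j - bJ j) ^ 2 := by
      rw [← Finset.univ_inter (JF \ T), ← Finset.sum_ite_mem]
      apply Finset.sum_le_sum
      intro j _
      by_cases hmem : j ∈ JF \ T
      · have hjJ : j ∈ J := by
          have := (Finset.mem_sdiff.1 hmem).1
          simpa [hJF] using this
        have hjz : z j = 0 := by
          have := (Finset.mem_sdiff.1 hmem).2
          simpa [hT] using this
        simp [hmem, hbJ, thresh, hjJ, hjz]
      · simp [hmem, sq_nonneg]
    have e1 := Finset.sum_inter_add_sum_sdiff JF S (fun j => b j ^ 2)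
    have e2 := Finset.sum_inter_add_sum_sdiff JF T (fun j => b j ^ 2)
    have eT : JF ∩ T = T := by
      apply Finset.inter_eq_right.2
      intro j hj
      simp only [hJF, Finset.mem_filter, Finset.mem_univ, true_and]
      exact hTJ j hj
    have eS : ∑ j ∈ JF ∩ S, b j ^ 2 = ∑ j ∈ S, b j ^ 2 := by
      apply Finset.sum_subset Finset.inter_subset_right
      intro j hjS hjn
      have hjJ : j ∉ J := by
        intro h
        exact hjn (Finset.mem_inter.2 ⟨by simp [hJF, h], hjS⟩)
      have : b j = 0 := by
        have h1 := hJu' j hjJ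
        have h2 := hSdef j
        rw [h1] at h2
        simp [hjS] at h2
        exact h2.symm
      simp [this]
    have hkey : ∑ j ∈ T, b j ^ 2 ≤ ∑ j ∈ S, b j ^ 2 :=
      key_sum b S T (by omega) hSne hSmax
    rw [lhs_eq]
    rw [eT] at e2
    calc ∑ j ∈ JF \ S, b j ^ 2 ≤ ∑ j ∈ JF \ T, b j ^ 2 := by linarith
    _ ≤ ∑ j, (z j - bJ j) ^ 2 := rhs_ge
  -- from sums to norms
  have h2 : ‖u' - bJ‖ ≤ ‖z - bJ‖ := by
    rw [EuclideanSpace.norm_eq, EuclideanSpace.norm_eq]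
    apply Real.sqrt_le_sqrt
    simpa [Real.norm_eq_abs, sq_abs] using hsum
  have h3 : ‖z - u'‖ ≤ 2 * ‖(z - v) - thresh J w‖ := by
    have : z - u' = (z - bJ) + (bJ - u') := by abel
    calc ‖z - u'‖ = ‖(z - bJ) + (bJ - u')‖ := by rw [this]
    _ ≤ ‖z - bJ‖ + ‖bJ - u'‖ := norm_add_le _ _
    _ = ‖z - bJ‖ + ‖u' - bJ‖ := by rw [norm_sub_rev bJ u']
    _ ≤ 2 * ‖z - bJ‖ := by linarith
    _ = 2 * ‖(z - v) - thresh J w‖ := by rw [hzbJ]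
  have h4 : ‖u - u'‖ ≤ ‖z - u'‖ := by
    have hne : u - u' = (‖u'‖⁻¹ - 1) • u' := by rw [hu, sub_smul, one_smul]
    have : ‖u - u'‖ = |1 - ‖u'‖| := by
      rw [hne, norm_smul, Real.norm_eq_abs]
      rw [← abs_of_nonneg (norm_nonneg u'), ← abs_mul]
      rw [abs_of_nonneg (norm_nonneg u')]
      congr 1
      field_simp
    rw [this, ← hz.1]
    exact abs_norm_sub_norm_le z u'
  calc ‖z - u‖ = ‖(z - u') + (u' - u)‖ := by rw [show z - u = (z - u') + (u' - u) by abel]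
  _ ≤ ‖z - u'‖ + ‖u' - u‖ := norm_add_le _ _
  _ = ‖z - u'‖ + ‖u - u'‖ := by rw [norm_sub_rev u' u]
  _ ≤ 2 * ‖z - u'‖ := by linarith
  _ ≤ 4 * ‖(z - v) - thresh J w‖ := by linarith
end
end

section
/- Let b > 0, let k, m, n, ℓ ∈ ℤ₊, and let τ, δ, ρ ∈ (0,1] with τm ∈ ℤ₊ and 1 ≤ ℓ ≤ τm. Set t = √( (2/ℓ)·log( 2·2^ℓ·C(m,ℓ)·C(n,k)·(3τm/ρ) ) ). If δm ≥ b·max{ log C(n,k), log(3τm/ρ), log 2 }, then ℓt/m ≤ τ·√(2·log(2e/τ)) + 3·√(2δτ/b). -/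
set_option maxHeartbeats 1000000

lemma aux_sqrt_add_le (x y : ℝ) (hx : 0 ≤ x) (hy : 0 ≤ y) :
    Real.sqrt (x + y) ≤ Real.sqrt x + Real.sqrt y := by
  have h : x + y ≤ (Real.sqrt x + Real.sqrt y) ^ 2 := by
    nlinarith [Real.sq_sqrt hx, Real.sq_sqrt hy, Real.sqrt_nonneg x, Real.sqrt_nonneg y]
  calc Real.sqrt (x + y) ≤ Real.sqrt ((Real.sqrt x + Real.sqrt y) ^ 2) := Real.sqrt_le_sqrt h
    _ = _ := Real.sqrt_sq (by positivity)

/-- the arithmetic bound on `ℓt/m` used to control the adversarial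
error term. -/
theorem stmt_17 (b : ℝ) (hb : 0 < b) (k m n ℓ : ℕ)
    (hk : 0 < k) (hm : 0 < m) (hn : 0 < n) (hℓ : 0 < ℓ)
    (τ δ ρ : ℝ) (hτ : τ ∈ Set.Ioc (0 : ℝ) 1) (hδ : δ ∈ Set.Ioc (0 : ℝ) 1)
    (hρ : ρ ∈ Set.Ioc (0 : ℝ) 1)
    (hτm : ∃ mτ : ℕ, 0 < mτ ∧ (mτ : ℝ) = τ * m)
    (hℓτm : (ℓ : ℝ) ≤ τ * m)
    (t : ℝ)
    (ht : t = Real.sqrt ((2 / ℓ) *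
      Real.log (2 * 2 ^ ℓ * (m.choose ℓ : ℝ) * (n.choose k : ℝ) * (3 * τ * m / ρ))))
    (hδm : δ * m ≥
      b * max (max (Real.log (n.choose k : ℝ)) (Real.log (3 * τ * m / ρ))) (Real.log 2)) :
    ℓ * t / m ≤
      τ * Real.sqrt (2 * Real.log (2 * Real.exp 1 / τ)) + 3 * Real.sqrt (2 * δ * τ / b) := by
  obtain ⟨hτ0, hτ1⟩ := hτ
  obtain ⟨hδ0, hδ1⟩ := hδ
  obtain ⟨hρ0, hρ1⟩ := hρ
  have hm0 : (0:ℝ) < m := by exact_mod_cast hm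
  have hℓ0 : (0:ℝ) < ℓ := by exact_mod_cast hℓ
  have hℓ1 : (1:ℝ) ≤ ℓ := by exact_mod_cast hℓ
  have hτm0 : 0 < τ * (m:ℝ) := by positivity
  have hRHS0 : 0 ≤ τ * Real.sqrt (2 * Real.log (2 * Real.exp 1 / τ))
      + 3 * Real.sqrt (2 * δ * τ / b) := by
    have := Real.sqrt_nonneg (2 * Real.log (2 * Real.exp 1 / τ))
    have := Real.sqrt_nonneg (2 * δ * τ / b)
    nlinarith
  have hE1 : (1:ℝ) ≤ 3 * τ * m / ρ := by
    rw [le_div_iff₀ hρ0]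
    nlinarith [hℓτm]
  have hE0 : (0:ℝ) < 3 * τ * m / ρ := lt_of_lt_of_le one_pos hE1
  rcases Nat.eq_zero_or_pos (n.choose k) with h0 | hpos
  · have ht0 : t = 0 := by rw [ht, h0]; push_cast; simp
    rw [ht0]
    have : (ℓ:ℝ) * 0 / m = 0 := by ring
    rw [this]
    exact hRHS0
  -- main case
  have hD1 : (1:ℝ) ≤ (n.choose k : ℝ) := by exact_mod_cast hpos
  have hD0 : (0:ℝ) < (n.choose k : ℝ) := lt_of_lt_of_le one_pos hD1
  have hℓm : ℓ ≤ m := by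
    have h : (ℓ:ℝ) ≤ (m:ℝ) := le_trans hℓτm (by nlinarith)
    exact_mod_cast h
  have hC1 : (1:ℝ) ≤ (m.choose ℓ : ℝ) := by exact_mod_cast Nat.choose_pos hℓm
  have hC0 : (0:ℝ) < (m.choose ℓ : ℝ) := lt_of_lt_of_le one_pos hC1
  set S1 : ℝ := ℓ * Real.log 2 + Real.log (m.choose ℓ : ℝ) with hS1def
  set S2 : ℝ := Real.log 2 with hS2def
  set S3 : ℝ := Real.log (n.choose k : ℝ) with hS3def
  set S4 : ℝ := Real.log (3 * τ * m / ρ) with hS4def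
  have hlogA : Real.log (2 * 2 ^ ℓ * (m.choose ℓ : ℝ) * (n.choose k : ℝ) * (3 * τ * m / ρ))
      = S1 + S2 + S3 + S4 := by
    rw [Real.log_mul (by positivity) (ne_of_gt hE0),
        Real.log_mul (by positivity) (ne_of_gt hD0),
        Real.log_mul (by positivity) (ne_of_gt hC0),
        Real.log_mul (by norm_num) (by positivity),
        Real.log_pow]
    simp only [hS1def, hS2def, hS3def, hS4def]
    ring
  have hS1nn : 0 ≤ S1 := by
    have := Real.log_nonneg hC1
    have h2 : (0:ℝ) ≤ Real.log 2 := Real.log_nonneg (by norm_num)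
    positivity
  have hS2nn : 0 ≤ S2 := Real.log_nonneg (by norm_num)
  have hS3nn : 0 ≤ S3 := Real.log_nonneg hD1
  have hS4nn : 0 ≤ S4 := Real.log_nonneg hE1
  -- rewrite ℓ * t as a single sqrt
  have key : (ℓ:ℝ) * t = Real.sqrt (2*ℓ*S1 + (2*ℓ*S2 + (2*ℓ*S3 + 2*ℓ*S4))) := by
    rw [ht, hlogA]
    rw [show (ℓ:ℝ) * Real.sqrt ((2/ℓ) * (S1 + S2 + S3 + S4))
        = Real.sqrt ((ℓ:ℝ)^2 * ((2/ℓ) * (S1 + S2 + S3 + S4))) by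
      rw [Real.sqrt_mul (sq_nonneg _), Real.sqrt_sq hℓ0.le]]
    congr 1
    field_simp
    ring
  -- bound on S1 part
  have hv1 : (1:ℝ) ≤ Real.log (2 * Real.exp 1 / τ) := by
    have he : Real.exp 1 ≤ 2 * Real.exp 1 / τ := by
      rw [le_div_iff₀ hτ0]
      nlinarith [Real.exp_pos 1]
    calc (1:ℝ) = Real.log (Real.exp 1) := (Real.log_exp 1).symm
      _ ≤ _ := Real.log_le_log (Real.exp_pos 1) he
  have hchoose : (m.choose ℓ : ℝ) ≤ (Real.exp 1 * m / ℓ) ^ ℓ := by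
    have h1 : (m.choose ℓ : ℝ) ≤ (m:ℝ) ^ ℓ / (ℓ.factorial : ℝ) := Nat.choose_le_pow_div ℓ m
    have h2 : ((ℓ:ℝ)) ^ ℓ / (ℓ.factorial : ℝ) ≤ Real.exp ℓ :=
      Real.pow_div_factorial_le_exp (x := (ℓ:ℝ)) hℓ0.le ℓ
    have hfac : (0:ℝ) < (ℓ.factorial : ℝ) := by exact_mod_cast ℓ.factorial_pos
    calc (m.choose ℓ : ℝ) ≤ (m:ℝ) ^ ℓ / (ℓ.factorial : ℝ) := h1
      _ = ((m:ℝ)/ℓ) ^ ℓ * (((ℓ:ℝ)) ^ ℓ / (ℓ.factorial : ℝ)) := by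
          rw [div_pow]
          field_simp
      _ ≤ ((m:ℝ)/ℓ) ^ ℓ * Real.exp ℓ := by
          apply mul_le_mul_of_nonneg_left h2 (by positivity)
      _ = (Real.exp 1 * m / ℓ) ^ ℓ := by
          rw [← Real.exp_one_pow, ← mul_pow]
          congr 1
          ring
  have hlogC : Real.log (m.choose ℓ : ℝ) ≤ ℓ * Real.log (Real.exp 1 * m / ℓ) := by
    calc Real.log (m.choose ℓ : ℝ) ≤ Real.log ((Real.exp 1 * m / ℓ) ^ ℓ) :=
          Real.log_le_log hC0 hchoose
      _ = ℓ * Real.log (Real.exp 1 * m / ℓ) := by rw [Real.log_pow]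
  have hS1le : S1 ≤ ℓ * Real.log (2 * Real.exp 1 * m / ℓ) := by
    have hsplit : Real.log (2 * Real.exp 1 * m / ℓ)
        = Real.log 2 + Real.log (Real.exp 1 * m / ℓ) := by
      rw [← Real.log_mul (by norm_num) (by positivity)]
      congr 1
      ring
    rw [hsplit, hS1def]
    nlinarith [hlogC]
  have hlogu : Real.log (2 * Real.exp 1 * m / ℓ)
      = Real.log (2 * Real.exp 1 / τ) + Real.log (τ * m / ℓ) := by
    rw [← Real.log_mul (by positivity) (by positivity)]
    congr 1
    field_simp
  have hsub : Real.log (τ * m / ℓ) ≤ τ * m / ℓ - 1 :=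
    Real.log_le_sub_one_of_pos (by positivity)
  have hB1 : 2 * ℓ * S1 ≤ (τ*m)^2 * (2 * Real.log (2 * Real.exp 1 / τ)) := by
    set x : ℝ := (ℓ:ℝ)
    set y : ℝ := τ * m
    set lv : ℝ := Real.log (2 * Real.exp 1 / τ)
    have hxy : x ≤ y := hℓτm
    have hx1 : 1 ≤ x := hℓ1
    have hmain : x^2 * Real.log (2 * Real.exp 1 * m / ℓ) ≤ y^2 * lv := by
      rw [hlogu]
      have h1 : x^2 * Real.log (y / x) ≤ x * y - x^2 := by
        have := mul_le_mul_of_nonneg_left hsub (sq_nonneg x)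
        have hx0 : x ≠ 0 := by positivity
        calc x^2 * Real.log (y / x) ≤ x^2 * (y / x - 1) := this
          _ = x * y - x^2 := by field_simp
      nlinarith [sq_nonneg (y - x), mul_nonneg (mul_nonneg (sub_nonneg.2 hxy) (by positivity : (0:ℝ) ≤ y + x)) (sub_nonneg.2 hv1)]
    have h2 : 2 * x * S1 ≤ 2 * (x^2 * Real.log (2 * Real.exp 1 * m / ℓ)) := by
      nlinarith [hS1le]
    nlinarith [hmain]
  have sqrtB1 : Real.sqrt (2*ℓ*S1) ≤ τ * Real.sqrt (2 * Real.log (2 * Real.exp 1 / τ)) * m := by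
    calc Real.sqrt (2*ℓ*S1) ≤ Real.sqrt ((τ*m)^2 * (2 * Real.log (2 * Real.exp 1 / τ))) :=
          Real.sqrt_le_sqrt hB1
      _ = (τ*m) * Real.sqrt (2 * Real.log (2 * Real.exp 1 / τ)) := by
          rw [Real.sqrt_mul (sq_nonneg _), Real.sqrt_sq hτm0.le]
      _ = _ := by ring
  -- bounds for S2, S3, S4
  have hgen : ∀ S : ℝ, 0 ≤ S →
      b * S ≤ δ * m → Real.sqrt (2*ℓ*S) ≤ Real.sqrt (2*δ*τ/b) * m := by
    intro S hSnn hSb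
    have hSle : S ≤ δ * m / b := by rw [le_div_iff₀ hb]; linarith [hSb]
    have h3 : 2*ℓ*S ≤ (m:ℝ)^2 * (2*δ*τ/b) := by
      have h1 : 2*(ℓ:ℝ) ≤ 2*(τ*m) := by linarith
      have h2 : 2*ℓ*S ≤ 2*(τ*m)*(δ*m/b) :=
        mul_le_mul h1 hSle hSnn (by positivity)
      calc 2*ℓ*S ≤ 2*(τ*m)*(δ*m/b) := h2
        _ = (m:ℝ)^2 * (2*δ*τ/b) := by ring
    calc Real.sqrt (2*ℓ*S) ≤ Real.sqrt ((m:ℝ)^2 * (2*δ*τ/b)) := Real.sqrt_le_sqrt h3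
      _ = m * Real.sqrt (2*δ*τ/b) := by rw [Real.sqrt_mul (sq_nonneg _), Real.sqrt_sq hm0.le]
      _ = _ := by ring
  have hmaxle : ∀ S : ℝ, S ≤ max (max S3 S4) S2 → b * S ≤ δ * m := by
    intro S hS
    calc b * S ≤ b * max (max S3 S4) S2 := by
          apply mul_le_mul_of_nonneg_left hS hb.le
      _ ≤ δ * m := hδm
  have sqrtB2 := hgen S2 hS2nn (hmaxle S2 (le_max_right _ _))
  have sqrtB3 := hgen S3 hS3nn (hmaxle S3 (le_max_of_le_left (le_max_left _ _)))
  have sqrtB4 := hgen S4 hS4nn (hmaxle S4 (le_max_of_le_left (le_max_right _ _)))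
  -- assemble
  rw [div_le_iff₀ hm0, key]
  have hnn1 : (0:ℝ) ≤ 2*ℓ*S1 := by positivity
  have hnn2 : (0:ℝ) ≤ 2*ℓ*S2 := by positivity
  have hnn3 : (0:ℝ) ≤ 2*ℓ*S3 := by positivity
  have hnn4 : (0:ℝ) ≤ 2*ℓ*S4 := by positivity
  calc Real.sqrt (2*ℓ*S1 + (2*ℓ*S2 + (2*ℓ*S3 + 2*ℓ*S4)))
      ≤ Real.sqrt (2*ℓ*S1) + Real.sqrt (2*ℓ*S2 + (2*ℓ*S3 + 2*ℓ*S4)) :=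
        aux_sqrt_add_le _ _ hnn1 (by positivity)
    _ ≤ Real.sqrt (2*ℓ*S1) + (Real.sqrt (2*ℓ*S2) + Real.sqrt (2*ℓ*S3 + 2*ℓ*S4)) := by
        have := aux_sqrt_add_le (2*ℓ*S2) (2*ℓ*S3 + 2*ℓ*S4) hnn2 (by positivity)
        linarith
    _ ≤ Real.sqrt (2*ℓ*S1) + (Real.sqrt (2*ℓ*S2) + (Real.sqrt (2*ℓ*S3) + Real.sqrt (2*ℓ*S4))) := by
        have := aux_sqrt_add_le (2*ℓ*S3) (2*ℓ*S4) hnn3 hnn4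
        linarith
    _ ≤ τ * Real.sqrt (2 * Real.log (2 * Real.exp 1 / τ)) * m
        + (Real.sqrt (2*δ*τ/b) * m + (Real.sqrt (2*δ*τ/b) * m + Real.sqrt (2*δ*τ/b) * m)) := by
        linarith
    _ = (τ * Real.sqrt (2 * Real.log (2 * Real.exp 1 / τ)) + 3 * Real.sqrt (2 * δ * τ / b)) * m := by
        ring
end
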